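/- Let P, Q be coprime polynomials with deg P = n, deg Q = m, and let R = P/Q. Let α ∈ ℂ with P(α)Q(α) ≠ 0 and R(α) ≠ 0, let a ≠ 0, and let M(z) = a z/(z − α). Then the pushforward of the vector field R(z) d/dz under M is a rational vector field R̃(w) d/dw where R̃(w) = M'(M⁻¹(w)) · R(M⁻¹(w)) is a quotient of two polynomials of degrees n + m + 2 and n + m respectively. -/

import Mathlib

/-!
Substituting z = αw/(w - a) into a polynomial p with deg p ≤ n and clearing the denominator
(w - a)ⁿ gives a polynomial in w of degree at most n whose wⁿ-coefficient is p(α); hence its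
degree is exactly n when p(α) ≠ 0. Since M'(z) = -aα/(z - α)² and z - α = aα/(w - a), the
pushforward is -(w - a)^(m+2) P̃(w) / (aα (w - a)ⁿ Q̃(w)), with P̃, Q̃ the cleared substitutes
of P and Q.
-/

open Polynomial

namespace Polynomial

section MoebiusNumerator

variable {K : Type*} [Field K]

noncomputable def moebiusNumerator (p : K[X]) (α a : K) (n : ℕ) : K[X] :=
  ∑ k ∈ Finset.range (n + 1), C (p.coeff k * α ^ k) * (X ^ k * (X - C a) ^ (n - k))

lemma monic_X_pow_mul_X_sub_C_pow (a : K) (k l : ℕ) : (X ^ k * (X - C a) ^ l).Monic :=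
  (monic_X_pow k).mul ((monic_X_sub_C a).pow l)

lemma natDegree_X_pow_mul_X_sub_C_pow (a : K) (k l : ℕ) :
    (X ^ k * (X - C a) ^ l).natDegree = k + l := by
  rw [(monic_X_pow k).natDegree_mul ((monic_X_sub_C a).pow l), natDegree_X_pow,
    natDegree_pow, natDegree_X_sub_C, mul_one]

lemma natDegree_moebiusNumerator_le (p : K[X]) (α a : K) (n : ℕ) :
    (moebiusNumerator p α a n).natDegree ≤ n := by
  refine natDegree_sum_le_of_forall_le _ _ fun k hk => ?_
  have hkn : k ≤ n := Nat.lt_succ_iff.mp (Finset.mem_range.mp hk)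
  calc _ ≤ (X ^ k * (X - C a) ^ (n - k)).natDegree := natDegree_C_mul_le _ _
    _ = n := by rw [natDegree_X_pow_mul_X_sub_C_pow]; omega

lemma coeff_moebiusNumerator_self {p : K[X]} {n : ℕ} (hp : p.natDegree ≤ n) (α a : K) :
    (moebiusNumerator p α a n).coeff n = p.eval α := by
  have hterm : ∀ k ∈ Finset.range (n + 1),
      (C (p.coeff k * α ^ k) * (X ^ k * (X - C a) ^ (n - k))).coeff n = p.coeff k * α ^ k := by
    intro k hk
    have hkn : k ≤ n := Nat.lt_succ_iff.mp (Finset.mem_range.mp hk)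
    have hmonic := (monic_X_pow_mul_X_sub_C_pow a k (n - k)).coeff_natDegree
    rw [natDegree_X_pow_mul_X_sub_C_pow, Nat.add_sub_cancel' hkn] at hmonic
    rw [coeff_C_mul, hmonic, mul_one]
  rw [moebiusNumerator, finsetSum_coeff, Finset.sum_congr rfl hterm,
    eval_eq_sum_range' (Nat.lt_succ_of_le hp)]

lemma natDegree_moebiusNumerator {p : K[X]} {n : ℕ} (hp : p.natDegree ≤ n) {α : K}
    (hpα : p.eval α ≠ 0) (a : K) : (moebiusNumerator p α a n).natDegree = n :=
  le_antisymm (natDegree_moebiusNumerator_le p α a n)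
    (le_natDegree_of_ne_zero (by rwa [coeff_moebiusNumerator_self hp]))

lemma moebiusNumerator_ne_zero {p : K[X]} {n : ℕ} (hp : p.natDegree ≤ n) {α : K}
    (hpα : p.eval α ≠ 0) (a : K) : moebiusNumerator p α a n ≠ 0 := fun h =>
  hpα (by rw [← coeff_moebiusNumerator_self hp α a, h, coeff_zero])

lemma natDegree_X_sub_C_pow_mul_moebiusNumerator {p : K[X]} {n : ℕ} (hp : p.natDegree ≤ n)
    {α : K} (hpα : p.eval α ≠ 0) (a : K) (k : ℕ) :
    ((X - C a) ^ k * moebiusNumerator p α a n).natDegree = k + n := by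
  rw [natDegree_mul (pow_ne_zero _ (X_sub_C_ne_zero a)) (moebiusNumerator_ne_zero hp hpα a),
    natDegree_pow, natDegree_X_sub_C, mul_one, natDegree_moebiusNumerator hp hpα]

lemma eval_moebiusNumerator {p : K[X]} {n : ℕ} (hp : p.natDegree ≤ n) (α : K) {a w : K}
    (hw : w ≠ a) :
    (moebiusNumerator p α a n).eval w = (w - a) ^ n * p.eval (α * w / (w - a)) := by
  have hwa : w - a ≠ 0 := sub_ne_zero.mpr hw
  rw [moebiusNumerator, eval_finsetSum, eval_eq_sum_range' (Nat.lt_succ_of_le hp),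
    Finset.mul_sum]
  refine Finset.sum_congr rfl fun k hk => ?_
  have hkn : k ≤ n := Nat.lt_succ_iff.mp (Finset.mem_range.mp hk)
  have hsplit : (w - a) ^ n = (w - a) ^ (n - k) * (w - a) ^ k := by
    rw [← pow_add, Nat.sub_add_cancel hkn]
  simp only [eval_mul, eval_C, eval_pow, eval_X, eval_sub]
  rw [hsplit, div_pow]
  field_simp
  ring

end MoebiusNumerator

end Polynomial

lemma deriv_mul_div_sub {𝕜 : Type*} [NontriviallyNormedField 𝕜] (a α : 𝕜) {z : 𝕜}
    (hz : z ≠ α) : deriv (fun z => a * z / (z - α)) z = -(a * α) / (z - α) ^ 2 := by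
  have hder : HasDerivAt (fun z => a * z / (z - α))
      ((a * 1 * (z - α) - a * z * 1) / (z - α) ^ 2) z :=
    ((hasDerivAt_id' z).const_mul a).div ((hasDerivAt_id' z).sub_const α) (sub_ne_zero.mpr hz)
  rw [hder.deriv]
  ring

theorem stmt_4_general (P Q : Polynomial ℂ) (n m : ℕ)
    (hn : P.natDegree = n) (hm : Q.natDegree = m)
    (α a : ℂ) (hα : α ≠ 0) (ha : a ≠ 0)
    (hPα : P.eval α ≠ 0) (hQα : Q.eval α ≠ 0)
    (M Minv : ℂ → ℂ)
    (hM : ∀ z, M z = a * z / (z - α))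
    (hMinv : ∀ w, Minv w = α * w / (w - a)) :
    ∃ Pt Qt : Polynomial ℂ, Pt.natDegree = n + m + 2 ∧ Qt.natDegree = n + m ∧
      ∀ w : ℂ, w ≠ a → Qt.eval w ≠ 0 →
        deriv M (Minv w) * (P.eval (Minv w) / Q.eval (Minv w)) =
          Pt.eval w / Qt.eval w := by
  have hPn : P.natDegree ≤ n := hn.le
  have hQm : Q.natDegree ≤ m := hm.le
  refine ⟨(X - C a) ^ (m + 2) * moebiusNumerator P α a n,
    C (-(a * α)) * ((X - C a) ^ n * moebiusNumerator Q α a m), ?_, ?_, fun w hw _ => ?_⟩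
  · rw [natDegree_X_sub_C_pow_mul_moebiusNumerator hPn hPα]
    ring
  · rw [natDegree_C_mul (neg_ne_zero.mpr (mul_ne_zero ha hα)),
      natDegree_X_sub_C_pow_mul_moebiusNumerator hQm hQα]
  · have hwa : w - a ≠ 0 := sub_ne_zero.mpr hw
    have hMinv_sub : Minv w - α = a * α / (w - a) := by
      rw [hMinv]
      field_simp
      ring
    have hMinv_ne : Minv w ≠ α := sub_ne_zero.mp (by
      rw [hMinv_sub]; exact div_ne_zero (mul_ne_zero ha hα) hwa)
    rw [funext hM, deriv_mul_div_sub a α hMinv_ne, hMinv_sub]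
    simp only [eval_mul, eval_C, eval_pow, eval_sub, eval_X, eval_moebiusNumerator hPn α hw,
      eval_moebiusNumerator hQm α hw, ← hMinv]
    field_simp
    ring

/-- Let R = P/Q with P, Q coprime, deg P = n, deg Q = m, let α be a regular
point (P(α)Q(α) ≠ 0, R(α) ≠ 0), a ≠ 0, and M(z) = a z/(z − α) (with inverse
M⁻¹(w) = α w/(w − a)). Then the pushforward vector field
R̃(w) = M'(M⁻¹(w)) · R(M⁻¹(w)) is a quotient of two polynomials of degrees
n + m + 2 and n + m respectively. -/
theorem stmt_4 (P Q : Polynomial ℂ) (hcop : IsCoprime P Q) (n m : ℕ)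
    (hn : P.natDegree = n) (hm : Q.natDegree = m)
    (α a : ℂ) (hα : α ≠ 0) (ha : a ≠ 0)
    (hPα : P.eval α ≠ 0) (hQα : Q.eval α ≠ 0)
    (hRα : P.eval α / Q.eval α ≠ 0)
    (M Minv : ℂ → ℂ)
    (hM : ∀ z, M z = a * z / (z - α))
    (hMinv : ∀ w, Minv w = α * w / (w - a)) :
    ∃ Pt Qt : Polynomial ℂ, Pt.natDegree = n + m + 2 ∧ Qt.natDegree = n + m ∧
      ∀ w : ℂ, w ≠ a → Qt.eval w ≠ 0 →
        deriv M (Minv w) * (P.eval (Minv w) / Q.eval (Minv w)) =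
          Pt.eval w / Qt.eval w :=
  stmt_4_general P Q n m hn hm α a hα ha hPα hQα M Minv hM hMinv
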